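/- arXiv:1610.02218 — 2 statements merged into one kernel-verified Lean document; each statement's English description precedes it below -/
import Mathlib

section
/- Let y, ȳ : [θ, θ+τ] → ℝⁿ be continuous functions satisfying the integral relations y(t) − ȳ(t) = (y(θ) − ȳ(θ)) + ∫_θ^t [f(y(s)) − f(ȳ(s))] ds + ∫_θ^t G(s) ds for all t ∈ [θ, θ+τ], where f is L_f-Lipschitz on a set containing the ranges of y and ȳ, and G : [θ, θ+τ] → ℝⁿ is continuous with ‖∫_θ^{θ+τ} G(s) ds‖ > A for some A > 0. Then max_{t ∈ [θ, θ+τ]} ‖y(t) − ȳ(t)‖ > A / (2 + τ L_f). -/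
theorem stmt_6 (n : ℕ) (hn : 1 ≤ n)
    (y ybar : ℝ → EuclideanSpace ℝ (Fin n))
    (f : EuclideanSpace ℝ (Fin n) → EuclideanSpace ℝ (Fin n))
    (G : ℝ → EuclideanSpace ℝ (Fin n))
    (S : Set (EuclideanSpace ℝ (Fin n)))
    (θ τ Lf A : ℝ) (hτ : 0 < τ) (hLf : 0 ≤ Lf) (hA : 0 < A)
    (hycont : ContinuousOn y (Set.Icc θ (θ + τ)))
    (hybarcont : ContinuousOn ybar (Set.Icc θ (θ + τ)))
    (hyS : ∀ t ∈ Set.Icc θ (θ + τ), y t ∈ S ∧ ybar t ∈ S)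
    (hfLip : ∀ u ∈ S, ∀ v ∈ S, ‖f u - f v‖ ≤ Lf * ‖u - v‖)
    (hGcont : ContinuousOn G (Set.Icc θ (θ + τ)))
    (hGint : A < ‖∫ s in θ..(θ + τ), G s‖)
    (hrel : ∀ t ∈ Set.Icc θ (θ + τ),
      y t - ybar t = (y θ - ybar θ)
        + (∫ s in θ..t, (f (y s) - f (ybar s)))
        + ∫ s in θ..t, G s) :
    ∃ t ∈ Set.Icc θ (θ + τ), A / (2 + τ * Lf) < ‖y t - ybar t‖ := by
  have hθτ : θ ≤ θ + τ := by linarith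
  have hθmem : θ ∈ Set.Icc θ (θ + τ) := ⟨le_refl _, hθτ⟩
  have hτmem : θ + τ ∈ Set.Icc θ (θ + τ) := ⟨hθτ, le_refl _⟩
  have hcont : ContinuousOn (fun t => ‖y t - ybar t‖) (Set.Icc θ (θ + τ)) :=
    (hycont.sub hybarcont).norm
  obtain ⟨t₀, ht₀mem, ht₀max⟩ :=
    (isCompact_Icc).exists_isMaxOn ⟨θ, hθmem⟩ hcont
  set M := ‖y t₀ - ybar t₀‖ with hM
  have hMmax : ∀ t ∈ Set.Icc θ (θ + τ), ‖y t - ybar t‖ ≤ M := fun t ht => ht₀max ht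
  have hM0 : 0 ≤ M := norm_nonneg _
  refine ⟨t₀, ht₀mem, ?_⟩
  rw [div_lt_iff₀ (by nlinarith : (0:ℝ) < 2 + τ * Lf)]
  -- bound the f-integral
  have hfb : ‖∫ s in θ..(θ + τ), (f (y s) - f (ybar s))‖ ≤ (Lf * M) * |θ + τ - θ| := by
    apply intervalIntegral.norm_integral_le_of_norm_le_const
    intro x hx
    rw [Set.uIoc_of_le hθτ] at hx
    have hx' : x ∈ Set.Icc θ (θ + τ) := ⟨le_of_lt hx.1, hx.2⟩
    have h1 := hfLip _ (hyS x hx').1 _ (hyS x hx').2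
    have h2 := hMmax x hx'
    calc ‖f (y x) - f (ybar x)‖ ≤ Lf * ‖y x - ybar x‖ := h1
      _ ≤ Lf * M := by nlinarith
  have habs : |θ + τ - θ| = τ := by rw [abs_of_pos]; ring; linarith
  rw [habs] at hfb
  -- rewrite ∫ G from hrel at θ+τ
  have heq : (∫ s in θ..(θ + τ), G s)
      = (y (θ + τ) - ybar (θ + τ)) - (y θ - ybar θ)
        - ∫ s in θ..(θ + τ), (f (y s) - f (ybar s)) := by
    have := hrel (θ + τ) hτmem
    rw [this]; abel
  have hbound : ‖∫ s in θ..(θ + τ), G s‖ ≤ M + M + Lf * M * τ := by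
    rw [heq]
    calc ‖(y (θ + τ) - ybar (θ + τ)) - (y θ - ybar θ)
          - ∫ s in θ..(θ + τ), (f (y s) - f (ybar s))‖
        ≤ ‖(y (θ + τ) - ybar (θ + τ)) - (y θ - ybar θ)‖
          + ‖∫ s in θ..(θ + τ), (f (y s) - f (ybar s))‖ := norm_sub_le _ _
      _ ≤ (‖y (θ + τ) - ybar (θ + τ)‖ + ‖y θ - ybar θ‖)
          + ‖∫ s in θ..(θ + τ), (f (y s) - f (ybar s))‖ := by
            gcongr; exact norm_sub_le _ _
      _ ≤ M + M + Lf * M * τ := by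
            have := hMmax _ hτmem
            have := hMmax _ hθmem
            nlinarith
  nlinarith
end

section
/- Assume: (i) the drive system (1) is sensitive with constants ε₀, Δ > 0 (for every δ₀ > 0 and chaotic solution x(t) there exist a chaotic solution x̄(t) and an interval J ⊆ [0,∞) of length ≥ Δ with ‖x(0) − x̄(0)‖ < δ₀ and ‖x(t) − x̄(t)‖ > ε₀ on J); (ii) all chaotic solutions of (1) take values in a compact set Λ with ‖x(t)‖ ≤ H₀ and form an equicontinuous family on [0,∞); (iii) g : ℝ³ → ℝ³ is continuous and satisfies ‖g(x) − g(x̄)‖ ≥ L_g ‖x − x̄‖ on Λ for some L_g > 0; (iv) all solutions of the response system (5) driven by chaotic solutions of (1) remain in a compact invariant set 𝒰 with norm bound K₀, and the Lorenz vector field f(v) = (−σ̄v₁+σ̄v₂, −v₁v₃+r̄v₁−v₂, v₁v₂−b̄v₃) is L_f-Lipschitz on 𝒰. Then the response system (5) is sensitive: there exist ε₁ > 0 and Δ̄ > 0 such that for every δ₁ > 0, every y₀ ∈ 𝒰, and every chaotic solution x(t) of (1), there exist y₁ ∈ 𝒰 with ‖y₀ − y₁‖ < δ₁, a chaotic solution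 x̄(t) of (1), and an interval J¹ ⊆ [0,∞) of length ≥ Δ̄ such that ‖φ_{x(t)}(t, y₀) − φ_{x̄(t)}(t, y₁)‖ > ε₁ for all t ∈ J¹. Explicitly, one may take ε₁ = τ L_g ε₀ / (12(2 + τ L_f)) where τ < Δ is an equicontinuity modulus for the family {g_j∘x₁ − g_j∘x₂} at tolerance L_g ε₀/6. -/
/-!
The drive gives a direction `e` along which the coupling term `g (x t) - g (xbar t)` of the
difference `w` of two responses (same initial value, drives `x` and `xbar`) stays at least
`c = Lg ε₀ / 2` for a fixed time `τ`: it is large at a separation time of the drive by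
expansivity of `g`, and cannot move much in time `τ` by equicontinuity. Along `e`, the
derivative of `⟪e, w⟫` is then at least `c - Lf ‖w‖`, so over time `τ` the norm of `w` must
reach `c τ / (2 + Lf τ)`. Since `w` has bounded derivative, it stays above a third of that
on an interval of fixed length after the time it is reached.
-/

open Set RealInnerProductSpace

section InnerProduct

variable {E : Type*} [NormedAddCommGroup E] [InnerProductSpace ℝ E]

lemma abs_real_inner_le_norm_of_norm_le_one {e : E} (he : ‖e‖ ≤ 1) (u : E) :
    |⟪e, u⟫| ≤ ‖u‖ :=
  (abs_real_inner_le_norm e u).trans (mul_le_of_le_one_left (norm_nonneg u) he)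

lemma exists_norm_le_one_forall_sub_le_inner (v : E) :
    ∃ e : E, ‖e‖ ≤ 1 ∧ ∀ u : E, ‖v‖ - ‖u - v‖ ≤ ⟪e, u⟫ := by
  have he : ‖‖v‖⁻¹ • v‖ ≤ 1 := by
    rw [norm_smul, norm_inv, norm_norm]
    exact inv_mul_le_one
  have hv : ⟪‖v‖⁻¹ • v, v⟫ = ‖v‖ := by
    rcases eq_or_ne v 0 with rfl | hv
    · simp
    · rw [real_inner_smul_left, real_inner_self_eq_norm_sq]
      field_simp
  refine ⟨‖v‖⁻¹ • v, he, fun u => ?_⟩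
  have hdiff := abs_real_inner_le_norm_of_norm_le_one he (u - v)
  rw [inner_sub_right, hv] at hdiff
  linarith [neg_abs_le (⟪‖v‖⁻¹ • v, u⟫ - ‖v‖)]

variable {w F D : ℝ → E} {e : E} {a τ L c : ℝ}

lemma mul_le_two_add_mul_of_forall_norm_le {S : ℝ} (hτ : 0 ≤ τ) (hL : 0 ≤ L) (he : ‖e‖ ≤ 1)
    (hw : ∀ t ∈ Icc a (a + τ), HasDerivAt w (F t + D t) t)
    (hF : ∀ t ∈ Icc a (a + τ), ‖F t‖ ≤ L * ‖w t‖)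
    (hD : ∀ t ∈ Icc a (a + τ), c ≤ ⟪e, D t⟫)
    (hS : ∀ t ∈ Icc a (a + τ), ‖w t‖ ≤ S) :
    c * τ ≤ (2 + L * τ) * S := by
  have hinner := abs_real_inner_le_norm_of_norm_le_one he
  have hderiv : ∀ t ∈ Icc a (a + τ), HasDerivAt (fun s => ⟪e, w s⟫) ⟪e, F t + D t⟫ t :=
    fun t ht => by simpa using (hasDerivAt_const t e).inner ℝ (hw t ht)
  have hslope : ∀ t ∈ Icc a (a + τ), c - L * S ≤ ⟪e, F t + D t⟫ := by
    intro t ht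
    have hFS : L * ‖w t‖ ≤ L * S := mul_le_mul_of_nonneg_left (hS t ht) hL
    rw [inner_add_right]
    linarith [neg_abs_le ⟪e, F t⟫, hinner (F t), hF t ht, hD t ht]
  have hleft : a ∈ Icc a (a + τ) := left_mem_Icc.2 (by linarith)
  have hright : a + τ ∈ Icc a (a + τ) := right_mem_Icc.2 (by linarith)
  have hgrowth := (convex_Icc a (a + τ)).mul_sub_le_image_sub_of_le_deriv
    (fun t ht => (hderiv t ht).continuousAt.continuousWithinAt)
    (fun t ht => (hderiv t (interior_subset ht)).differentiableAt.differentiableWithinAt)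
    (fun t ht => by
      rw [(hderiv t (interior_subset ht)).deriv]
      exact hslope t (interior_subset ht))
    a hleft (a + τ) hright (by linarith)
  have hstart := (neg_abs_le ⟪e, w a⟫).trans' (neg_le_neg ((hinner _).trans (hS a hleft)))
  have hend := (le_abs_self ⟪e, w (a + τ)⟫).trans ((hinner _).trans (hS _ hright))
  simp only [add_sub_cancel_left] at hgrowth
  linarith

lemma exists_mem_Icc_mul_le_norm (hτ : 0 ≤ τ) (hL : 0 ≤ L) (he : ‖e‖ ≤ 1)
    (hw : ∀ t ∈ Icc a (a + τ), HasDerivAt w (F t + D t) t)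
    (hF : ∀ t ∈ Icc a (a + τ), ‖F t‖ ≤ L * ‖w t‖)
    (hD : ∀ t ∈ Icc a (a + τ), c ≤ ⟪e, D t⟫) :
    ∃ s ∈ Icc a (a + τ), c * τ ≤ (2 + L * τ) * ‖w s‖ := by
  obtain ⟨s, hs, hmax⟩ := isCompact_Icc.exists_isMaxOn (nonempty_Icc.2 (by linarith))
    (fun t ht => (hw t ht).continuousAt.continuousWithinAt.norm)
  exact ⟨s, hs, mul_le_two_add_mul_of_forall_norm_le hτ hL he hw hF hD fun t ht => hmax ht⟩

end InnerProduct

lemma exists_pos_forall_norm_comp_sub_lt {E F : Type*} [SeminormedAddCommGroup E]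
    [SeminormedAddCommGroup F] {g : E → F} {Λ : Set E} {X : Set (ℝ → E)} (hΛ : IsCompact Λ)
    (hg : ContinuousOn g Λ)
    (hXΛ : ∀ x ∈ X, ∀ t : ℝ, 0 ≤ t → x t ∈ Λ)
    (hX : ∀ ε > 0, ∃ δ > 0, ∀ x ∈ X, ∀ t₁ t₂ : ℝ, 0 ≤ t₁ → 0 ≤ t₂ →
      |t₁ - t₂| < δ → ‖x t₁ - x t₂‖ < ε)
    {ε : ℝ} (hε : 0 < ε) :
    ∃ δ > 0, ∀ x ∈ X, ∀ t₁ t₂ : ℝ, 0 ≤ t₁ → 0 ≤ t₂ →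
      |t₁ - t₂| < δ → ‖g (x t₁) - g (x t₂)‖ < ε := by
  obtain ⟨η, hη, hgη⟩ :=
    Metric.uniformContinuousOn_iff.mp (hΛ.uniformContinuousOn_of_continuous hg) ε hε
  obtain ⟨δ, hδ, hxδ⟩ := hX η hη
  refine ⟨δ, hδ, fun x hx t₁ t₂ h₁ h₂ ht => ?_⟩
  simpa only [dist_eq_norm] using hgη _ (hXΛ x hx t₁ h₁) _ (hXΛ x hx t₂ h₂)
    (by simpa only [dist_eq_norm] using hxδ x hx t₁ t₂ h₁ h₂ ht)

lemma exists_forall_inner_ge_of_expansive {E F : Type*} [SeminormedAddCommGroup E]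
    [NormedAddCommGroup F] [InnerProductSpace ℝ F] {g : E → F} {Λ : Set E}
    {X : Set (ℝ → E)} {Lg ε₀ : ℝ} (hΛ : IsCompact Λ) (hg : ContinuousOn g Λ)
    (hgexp : ∀ x ∈ Λ, ∀ x' ∈ Λ, Lg * ‖x - x'‖ ≤ ‖g x - g x'‖)
    (hXΛ : ∀ x ∈ X, ∀ t : ℝ, 0 ≤ t → x t ∈ Λ)
    (hX : ∀ ε > 0, ∃ δ > 0, ∀ x ∈ X, ∀ t₁ t₂ : ℝ, 0 ≤ t₁ → 0 ≤ t₂ →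
      |t₁ - t₂| < δ → ‖x t₁ - x t₂‖ < ε)
    (hLg : 0 < Lg) (hε₀ : 0 < ε₀) :
    ∃ τ > 0, ∀ x ∈ X, ∀ xbar ∈ X, ∀ a : ℝ, 0 ≤ a → ε₀ < ‖x a - xbar a‖ →
      ∃ e : F, ‖e‖ ≤ 1 ∧ ∀ t ∈ Icc a (a + τ), Lg * ε₀ / 2 ≤ ⟪e, g (x t) - g (xbar t)⟫ := by
  obtain ⟨δ, hδ, hgx⟩ := exists_pos_forall_norm_comp_sub_lt hΛ hg hXΛ hX
    (ε := Lg * ε₀ / 4) (by positivity)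
  refine ⟨δ / 2, half_pos hδ, fun x hx xbar hxbar a ha hsep => ?_⟩
  obtain ⟨e, he, hinner⟩ := exists_norm_le_one_forall_sub_le_inner (g (x a) - g (xbar a))
  refine ⟨e, he, fun t ht => ?_⟩
  have ht0 : 0 ≤ t := ha.trans ht.1
  have hclose : |t - a| < δ := by
    rw [abs_of_nonneg (sub_nonneg.2 ht.1)]
    linarith [ht.2]
  have hfar : Lg * ε₀ < ‖g (x a) - g (xbar a)‖ :=
    (mul_lt_mul_of_pos_left hsep hLg).trans_le (hgexp _ (hXΛ x hx a ha) _ (hXΛ xbar hxbar a ha))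
  have hmove : ‖(g (x t) - g (xbar t)) - (g (x a) - g (xbar a))‖ < Lg * ε₀ / 2 := by
    rw [sub_sub_sub_comm]
    linarith [norm_sub_le (g (x t) - g (x a)) (g (xbar t) - g (xbar a)),
      hgx x hx t a ht0 ha hclose, hgx xbar hxbar t a ht0 ha hclose]
  linarith [hinner (g (x t) - g (xbar t))]

lemma sub_le_norm_of_norm_hasDerivAt_le {E : Type*} [NormedAddCommGroup E] [NormedSpace ℝ E]
    {w w' : ℝ → E} {s M ε : ℝ} (hM : 0 < M)
    (hw : ∀ t ∈ Icc s (s + ε / M), HasDerivAt w (w' t) t)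
    (hw' : ∀ t ∈ Icc s (s + ε / M), ‖w' t‖ ≤ M) :
    ∀ t ∈ Icc s (s + ε / M), ‖w s‖ - ε ≤ ‖w t‖ := by
  intro t ht
  have hlip := norm_image_sub_le_of_norm_deriv_le_segment'
    (fun r hr => (hw r hr).hasDerivWithinAt) (fun r hr => hw' r (Ico_subset_Icc_self hr)) t ht
  have htime : M * (t - s) ≤ ε := by
    have htε : t - s ≤ ε / M := by linarith [ht.2]
    rwa [le_div_iff₀ hM, mul_comm] at htε
  linarith [norm_sub_norm_le (w s) (w t), norm_sub_rev (w s) (w t)]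

lemma exists_forall_lt_norm_sub_of_forcing {E : Type*} [NormedAddCommGroup E]
    [InnerProductSpace ℝ E] {f : E → E} {U : Set E} {u v p q : ℝ → E} {e : E}
    {L K R a τ c : ℝ}
    (hu : ∀ t, 0 ≤ t → HasDerivAt u (f (u t) + p t) t)
    (hv : ∀ t, 0 ≤ t → HasDerivAt v (f (v t) + q t) t)
    (huU : ∀ t, 0 ≤ t → u t ∈ U) (hvU : ∀ t, 0 ≤ t → v t ∈ U)
    (hf : ∀ y ∈ U, ∀ z ∈ U, ‖f y - f z‖ ≤ L * ‖y - z‖) (hL : 0 ≤ L)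
    (huK : ∀ t, 0 ≤ t → ‖u t‖ ≤ K) (hvK : ∀ t, 0 ≤ t → ‖v t‖ ≤ K)
    (hpR : ∀ t, 0 ≤ t → ‖p t‖ ≤ R) (hqR : ∀ t, 0 ≤ t → ‖q t‖ ≤ R) (hR : 0 < R)
    (ha : 0 ≤ a) (hτ : 0 < τ) (hc : 0 < c) (he : ‖e‖ ≤ 1)
    (hforce : ∀ t ∈ Icc a (a + τ), c ≤ ⟪e, p t - q t⟫) :
    ∃ s, 0 ≤ s ∧ ∀ t ∈ Icc s (s + c * τ / (3 * (2 + L * τ)) / (L * (2 * K) + 2 * R)),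
      c * τ / (3 * (2 + L * τ)) < ‖u t - v t‖ := by
  set ε := c * τ / (3 * (2 + L * τ)) with hε
  have hK : 0 ≤ K := (norm_nonneg _).trans (huK 0 le_rfl)
  have hw : ∀ t, 0 ≤ t → HasDerivAt (u - v) ((f (u t) - f (v t)) + (p t - q t)) t :=
    fun t ht => ((hu t ht).sub (hv t ht)).congr_deriv (by abel)
  have hF : ∀ t, 0 ≤ t → ‖f (u t) - f (v t)‖ ≤ L * ‖(u - v) t‖ :=
    fun t ht => hf _ (huU t ht) _ (hvU t ht)
  have hM : ∀ t, 0 ≤ t → ‖(f (u t) - f (v t)) + (p t - q t)‖ ≤ L * (2 * K) + 2 * R := by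
    intro t ht
    have huv : ‖(u - v) t‖ ≤ 2 * K :=
      (norm_sub_le _ _).trans (by linarith [huK t ht, hvK t ht])
    have hpq : ‖p t - q t‖ ≤ 2 * R := (norm_sub_le _ _).trans (by linarith [hpR t ht, hqR t ht])
    exact (norm_add_le _ _).trans
      (add_le_add ((hF t ht).trans (mul_le_mul_of_nonneg_left huv hL)) hpq)
  obtain ⟨s, hs, hreach⟩ := exists_mem_Icc_mul_le_norm hτ.le hL he
    (fun t ht => hw t (ha.trans ht.1)) (fun t ht => hF t (ha.trans ht.1)) hforce
  have hs0 : 0 ≤ s := ha.trans hs.1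
  refine ⟨s, hs0, fun t ht => ?_⟩
  have hstay := sub_le_norm_of_norm_hasDerivAt_le (by positivity)
    (fun r hr => hw r (hs0.trans hr.1)) (fun r hr => hM r (hs0.trans hr.1)) t ht
  have h3ε : 3 * ε = c * τ / (2 + L * τ) := by
    rw [hε]
    field_simp
  rw [← div_le_iff₀' (by positivity), ← h3ε] at hreach
  have : 0 < ε := by positivity
  simp only [Pi.sub_apply] at hstay hreach
  linarith

/-- `X` is the set of chaotic solutions of the drive system (1) and `φ x y₀` is the solution
of the response system (5) driven by `x` with initial value `y₀`. -/
theorem stmt_18_general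
    (f : EuclideanSpace ℝ (Fin 3) → EuclideanSpace ℝ (Fin 3))
    (g : EuclideanSpace ℝ (Fin 3) → EuclideanSpace ℝ (Fin 3))
    (X : Set (ℝ → EuclideanSpace ℝ (Fin 3)))
    (Λ U : Set (EuclideanSpace ℝ (Fin 3)))
    (φ : (ℝ → EuclideanSpace ℝ (Fin 3)) → EuclideanSpace ℝ (Fin 3) →
      ℝ → EuclideanSpace ℝ (Fin 3))
    (ε₀ Δ Lg K₀ Lf : ℝ)
    (hε₀ : 0 < ε₀) (hΔ : 0 < Δ) (hLg : 0 < Lg)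
    (hK₀ : 0 < K₀) (hLf : 0 < Lf)
    -- (i) sensitivity of the drive system
    (hsens : ∀ δ₀ > 0, ∀ x ∈ X, ∃ xbar ∈ X, ‖x 0 - xbar 0‖ < δ₀ ∧
      ∃ a : ℝ, 0 ≤ a ∧ ∀ t ∈ Set.Icc a (a + Δ), ε₀ < ‖x t - xbar t‖)
    -- (ii) chaotic solutions lie in the compact set Λ, are bounded by H₀,
    -- and form an equicontinuous family on [0, ∞)
    (hΛcomp : IsCompact Λ)
    (hxΛ : ∀ x ∈ X, ∀ t : ℝ, 0 ≤ t → x t ∈ Λ)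
    (hequi : ∀ ε > 0, ∃ δ > 0, ∀ x ∈ X, ∀ t₁ t₂ : ℝ, 0 ≤ t₁ → 0 ≤ t₂ →
      |t₁ - t₂| < δ → ‖x t₁ - x t₂‖ < ε)
    -- (iii) g is continuous and expansive on Λ
    (hgcont : Continuous g)
    (hgexp : ∀ x ∈ Λ, ∀ x' ∈ Λ, Lg * ‖x - x'‖ ≤ ‖g x - g x'‖)
    -- (iv) solutions of the response system remain in the compact set U,
    -- bounded by K₀, and f is Lf-Lipschitz on U
    (hφode : ∀ x ∈ X, ∀ y₀ ∈ U, ∀ t : ℝ, 0 ≤ t →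
      HasDerivAt (φ x y₀) (f (φ x y₀ t) + g (x t)) t)
    (hφU : ∀ x ∈ X, ∀ y₀ ∈ U, ∀ t : ℝ, 0 ≤ t → φ x y₀ t ∈ U)
    (hφbnd : ∀ x ∈ X, ∀ y₀ ∈ U, ∀ t : ℝ, 0 ≤ t → ‖φ x y₀ t‖ ≤ K₀)
    (hfLip : ∀ u ∈ U, ∀ v ∈ U, ‖f u - f v‖ ≤ Lf * ‖u - v‖) :
    -- conclusion: the response system is sensitive
    ∃ ε₁ > 0, ∃ Δbar > 0, ∀ δ₁ > 0, ∀ y₀ ∈ U, ∀ x ∈ X,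
      ∃ y₁ ∈ U, ‖y₀ - y₁‖ < δ₁ ∧ ∃ xbar ∈ X, ∃ a : ℝ, 0 ≤ a ∧
        ∀ t ∈ Set.Icc a (a + Δbar), ε₁ < ‖φ x y₀ t - φ xbar y₁ t‖ := by
  obtain ⟨R, hR, hgR⟩ :=
    (hΛcomp.image_of_continuousOn hgcont.continuousOn).isBounded.exists_pos_norm_le
  have hgxR : ∀ x ∈ X, ∀ t, 0 ≤ t → ‖g (x t)‖ ≤ R :=
    fun x hx t ht => hgR _ (mem_image_of_mem g (hxΛ x hx t ht))
  obtain ⟨τ, hτ, hforce⟩ :=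
    exists_forall_inner_ge_of_expansive hΛcomp hgcont.continuousOn hgexp hxΛ hequi hLg hε₀
  refine ⟨Lg * ε₀ / 2 * τ / (3 * (2 + Lf * τ)), by positivity,
    Lg * ε₀ / 2 * τ / (3 * (2 + Lf * τ)) / (Lf * (2 * K₀) + 2 * R), by positivity,
    fun δ₁ hδ₁ y₀ hy₀ x hx => ?_⟩
  obtain ⟨xbar, hxbar, -, a, ha, hsep⟩ := hsens 1 one_pos x hx
  obtain ⟨e, he, hD⟩ := hforce x hx xbar hxbar a ha (hsep a (left_mem_Icc.2 (by linarith)))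
  exact ⟨y₀, hy₀, by simpa using hδ₁, xbar, hxbar,
    exists_forall_lt_norm_sub_of_forcing (hφode x hx y₀ hy₀) (hφode xbar hxbar y₀ hy₀)
      (hφU x hx y₀ hy₀) (hφU xbar hxbar y₀ hy₀) hfLip hLf.le (hφbnd x hx y₀ hy₀)
      (hφbnd xbar hxbar y₀ hy₀) (hgxR x hx) (hgxR xbar hxbar) hR ha hτ (by positivity) he hD⟩

/-- Theorem 1 of the paper: persistence of sensitivity in the response
Lorenz system. `X` is the set of chaotic solutions of the drive system (1),
`φ x y₀` is the solution of the response system (5) driven by `x` with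
initial value `y₀`, and `f` is the Lorenz vector field of the response. -/
theorem stmt_18
    (σ r b : ℝ)
    (f : EuclideanSpace ℝ (Fin 3) → EuclideanSpace ℝ (Fin 3))
    (hf : ∀ v : EuclideanSpace ℝ (Fin 3),
      f v 0 = -σ * v 0 + σ * v 1 ∧
      f v 1 = -(v 0) * v 2 + r * v 0 - v 1 ∧
      f v 2 = v 0 * v 1 - b * v 2)
    (g : EuclideanSpace ℝ (Fin 3) → EuclideanSpace ℝ (Fin 3))
    (X : Set (ℝ → EuclideanSpace ℝ (Fin 3)))
    (Λ U : Set (EuclideanSpace ℝ (Fin 3)))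
    (φ : (ℝ → EuclideanSpace ℝ (Fin 3)) → EuclideanSpace ℝ (Fin 3) →
      ℝ → EuclideanSpace ℝ (Fin 3))
    (ε₀ Δ H₀ Lg K₀ Lf : ℝ)
    (hε₀ : 0 < ε₀) (hΔ : 0 < Δ) (hH₀ : 0 < H₀) (hLg : 0 < Lg)
    (hK₀ : 0 < K₀) (hLf : 0 < Lf)
    -- (i) sensitivity of the drive system
    (hsens : ∀ δ₀ > 0, ∀ x ∈ X, ∃ xbar ∈ X, ‖x 0 - xbar 0‖ < δ₀ ∧
      ∃ a : ℝ, 0 ≤ a ∧ ∀ t ∈ Set.Icc a (a + Δ), ε₀ < ‖x t - xbar t‖)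
    -- (ii) chaotic solutions lie in the compact set Λ, are bounded by H₀,
    -- and form an equicontinuous family on [0, ∞)
    (hΛcomp : IsCompact Λ)
    (hxΛ : ∀ x ∈ X, ∀ t : ℝ, 0 ≤ t → x t ∈ Λ)
    (hxbnd : ∀ x ∈ X, ∀ t : ℝ, 0 ≤ t → ‖x t‖ ≤ H₀)
    (hequi : ∀ ε > 0, ∃ δ > 0, ∀ x ∈ X, ∀ t₁ t₂ : ℝ, 0 ≤ t₁ → 0 ≤ t₂ →
      |t₁ - t₂| < δ → ‖x t₁ - x t₂‖ < ε)
    -- (iii) g is continuous and expansive on Λ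
    (hgcont : Continuous g)
    (hgexp : ∀ x ∈ Λ, ∀ x' ∈ Λ, Lg * ‖x - x'‖ ≤ ‖g x - g x'‖)
    -- (iv) solutions of the response system remain in the compact set U,
    -- bounded by K₀, and f is Lf-Lipschitz on U
    (hUcomp : IsCompact U)
    (hφ0 : ∀ x ∈ X, ∀ y₀ ∈ U, φ x y₀ 0 = y₀)
    (hφode : ∀ x ∈ X, ∀ y₀ ∈ U, ∀ t : ℝ, 0 ≤ t →
      HasDerivAt (φ x y₀) (f (φ x y₀ t) + g (x t)) t)
    (hφU : ∀ x ∈ X, ∀ y₀ ∈ U, ∀ t : ℝ, 0 ≤ t → φ x y₀ t ∈ U)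
    (hφbnd : ∀ x ∈ X, ∀ y₀ ∈ U, ∀ t : ℝ, 0 ≤ t → ‖φ x y₀ t‖ ≤ K₀)
    (hfLip : ∀ u ∈ U, ∀ v ∈ U, ‖f u - f v‖ ≤ Lf * ‖u - v‖) :
    -- conclusion: the response system is sensitive
    ∃ ε₁ > 0, ∃ Δbar > 0, ∀ δ₁ > 0, ∀ y₀ ∈ U, ∀ x ∈ X,
      ∃ y₁ ∈ U, ‖y₀ - y₁‖ < δ₁ ∧ ∃ xbar ∈ X, ∃ a : ℝ, 0 ≤ a ∧
        ∀ t ∈ Set.Icc a (a + Δbar), ε₁ < ‖φ x y₀ t - φ xbar y₁ t‖ :=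
  stmt_18_general f g X Λ U φ ε₀ Δ Lg K₀ Lf hε₀ hΔ hLg hK₀ hLf hsens hΛcomp hxΛ hequi hgcont hgexp
    hφode hφU hφbnd hfLip
end
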